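/- arXiv:0812.1716 — 4 statements merged into one kernel-verified Lean document; each statement's English description precedes it below -/
import Mathlib

section
/- For every i ∈ I, the group endomorphism T_i of 𝒫 is bijective, i.e. T_i is an automorphism of 𝒫. -/
open Finsupp

/-- The ℓ-weight lattice 𝒫: the free abelian group (written additively) on
generators `π_{i,a}` for `i ∈ I`, `a ∈ ℂˣ`, realized as finitely supported
functions `I × ℂˣ → ℤ`. -/
abbrev LWeightLattice (I : Type*) := (I × ℂˣ) →₀ ℤ

/-- The generator `π_{i,a}` of 𝒫. -/
noncomputable def piGen {I : Type*} (i : I) (a : ℂˣ) : LWeightLattice I :=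
  Finsupp.single (i, a) 1

/-- The image of the generator `π_{j,a}` (given as the pair `p = (j,a)`) under `T_i`. -/
noncomputable def TGen {I : Type*} [Fintype I] [DecidableEq I]
    (A : I → I → ℤ) (d : I → ℕ) (q : ℂˣ) (i : I) (p : I × ℂˣ) : LWeightLattice I :=
  if p.1 = i then
    -piGen i (p.2 * (q ^ d i) ^ 2)
      + ∑ j ∈ Finset.univ.filter (fun j => A j i = -1), piGen j (p.2 * q ^ d i)
      + ∑ j ∈ Finset.univ.filter (fun j => A j i = -2),
          (piGen j (p.2 * q) + piGen j (p.2 * q ^ 3))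
      + ∑ j ∈ Finset.univ.filter (fun j => A j i = -3),
          (piGen j (p.2 * q) + piGen j (p.2 * q ^ 3) + piGen j (p.2 * q ^ 5))
  else piGen p.1 p.2

/-- The endomorphism `T_i` of 𝒫, the unique group endomorphism extending `TGen`. -/
noncomputable def TEnd {I : Type*} [Fintype I] [DecidableEq I]
    (A : I → I → ℤ) (d : I → ℕ) (q : ℂˣ) (i : I) : AddMonoid.End (LWeightLattice I) :=
  Finsupp.liftAddHom fun p => zmultiplesHom _ (TGen A d q i p)

/-- The ℓ-root `α_{i,a} := (T_i π_{i,a})⁻¹ · π_{i,a}`, written additively. -/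
noncomputable def lroot {I : Type*} [Fintype I] [DecidableEq I]
    (A : I → I → ℤ) (d : I → ℕ) (q : ℂˣ) (i : I) (a : ℂˣ) : LWeightLattice I :=
  piGen i a - TEnd A d q i (piGen i a)

/-!
`T_i` fixes every `π_{j,a}` with `j ≠ i` and sends `π_{i,b}` to `π_{i,bq_i²}⁻¹ · t(b)`, where the
tail `t(b)` is a product of generators `π_{j,·}` with `a_{ji} < 0`, hence `j ≠ i` as `a_{ii} = 2`.
So `T_i` fixes every tail, and it is inverted by the endomorphism that fixes the `π_{j,a}`, `j ≠ i`,
and sends `π_{i,a}` to `π_{i,aq_i⁻²}⁻¹ · t(aq_i⁻²)`.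
-/

section

variable {I : Type*}

theorem LWeightLattice.addHom_ext {M : Type*} [AddMonoid M] {f g : LWeightLattice I →+ M}
    (h : ∀ j a, f (piGen j a) = g (piGen j a)) : f = g :=
  Finsupp.addHom_ext' fun p => AddMonoidHom.ext_int (h p.1 p.2)

theorem LWeightLattice.leftInverse_of_piGen {f g : LWeightLattice I →+ LWeightLattice I}
    (h : ∀ j a, g (f (piGen j a)) = piGen j a) : Function.LeftInverse g f :=
  DFunLike.congr_fun (LWeightLattice.addHom_ext (f := g.comp f) (g := .id _) h)

theorem liftAddHom_zmultiplesHom_piGen (f : I × ℂˣ → LWeightLattice I) (j : I) (a : ℂˣ) :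
    Finsupp.liftAddHom (fun p => zmultiplesHom _ (f p)) (piGen j a) = f (j, a) := by
  rw [piGen, Finsupp.liftAddHom_apply_single, zmultiplesHom_apply, one_smul]

variable [Fintype I] (A : I → I → ℤ) (d : I → ℕ) (q : ℂˣ) (i : I)

noncomputable def TGenTail (b : ℂˣ) : LWeightLattice I :=
  ∑ j ∈ Finset.univ.filter (fun j => A j i = -1), piGen j (b * q ^ d i)
    + ∑ j ∈ Finset.univ.filter (fun j => A j i = -2), (piGen j (b * q) + piGen j (b * q ^ 3))
    + ∑ j ∈ Finset.univ.filter (fun j => A j i = -3),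
        (piGen j (b * q) + piGen j (b * q ^ 3) + piGen j (b * q ^ 5))

theorem map_TGenTail_of_fixes {F : Type*} [FunLike F (LWeightLattice I) (LWeightLattice I)]
    [AddMonoidHomClass F (LWeightLattice I) (LWeightLattice I)] (hAdiag : A i i = 2) (E : F)
    (hE : ∀ j, j ≠ i → ∀ a, E (piGen j a) = piGen j a) (b : ℂˣ) :
    E (TGenTail A d q i b) = TGenTail A d q i b := by
  have hne : ∀ c ≠ 2, ∀ j ∈ Finset.univ.filter (fun j => A j i = c), j ≠ i := by
    rintro c hc j hj rfl
    exact hc ((Finset.mem_filter.mp hj).2 ▸ hAdiag)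
  simp only [TGenTail, map_add, map_sum]
  congr 1
  congr 1
  all_goals exact Finset.sum_congr rfl fun j hj => by simp only [hE j (hne _ (by norm_num) j hj)]

variable [DecidableEq I]

theorem TEnd_piGen (j : I) (a : ℂˣ) : TEnd A d q i (piGen j a) = TGen A d q i (j, a) :=
  liftAddHom_zmultiplesHom_piGen _ j a

theorem TEnd_piGen_self (a : ℂˣ) :
    TEnd A d q i (piGen i a) = -piGen i (a * (q ^ d i) ^ 2) + TGenTail A d q i a := by
  rw [TEnd_piGen, TGen, if_pos rfl, TGenTail]
  abel

theorem TEnd_piGen_of_ne {j : I} (h : j ≠ i) (a : ℂˣ) : TEnd A d q i (piGen j a) = piGen j a := by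
  rw [TEnd_piGen, TGen, if_neg h]

noncomputable def TInvGen (p : I × ℂˣ) : LWeightLattice I :=
  if p.1 = i then
    -piGen i (p.2 * ((q ^ d i) ^ 2)⁻¹) + TGenTail A d q i (p.2 * ((q ^ d i) ^ 2)⁻¹)
  else piGen p.1 p.2

noncomputable def TInv : LWeightLattice I →+ LWeightLattice I :=
  Finsupp.liftAddHom fun p => zmultiplesHom _ (TInvGen A d q i p)

theorem TInv_piGen_self (a : ℂˣ) :
    TInv A d q i (piGen i a) =
      -piGen i (a * ((q ^ d i) ^ 2)⁻¹) + TGenTail A d q i (a * ((q ^ d i) ^ 2)⁻¹) := by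
  rw [TInv, liftAddHom_zmultiplesHom_piGen, TInvGen, if_pos rfl]

theorem TInv_piGen_of_ne {j : I} (h : j ≠ i) (a : ℂˣ) : TInv A d q i (piGen j a) = piGen j a := by
  rw [TInv, liftAddHom_zmultiplesHom_piGen, TInvGen, if_neg h]

theorem TInv_TEnd_piGen (hAdiag : A i i = 2) (j : I) (a : ℂˣ) :
    TInv A d q i (TEnd A d q i (piGen j a)) = piGen j a := by
  rcases eq_or_ne j i with rfl | h
  · rw [TEnd_piGen_self, map_add, map_neg, TInv_piGen_self, mul_inv_cancel_right,
      map_TGenTail_of_fixes A d q j hAdiag _ fun _ hk => TInv_piGen_of_ne A d q j hk]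
    abel
  · rw [TEnd_piGen_of_ne A d q i h, TInv_piGen_of_ne A d q i h]

theorem TEnd_TInv_piGen (hAdiag : A i i = 2) (j : I) (a : ℂˣ) :
    TEnd A d q i (TInv A d q i (piGen j a)) = piGen j a := by
  rcases eq_or_ne j i with rfl | h
  · rw [TInv_piGen_self, map_add, map_neg, TEnd_piGen_self, inv_mul_cancel_right,
      map_TGenTail_of_fixes A d q j hAdiag _ fun _ hk => TEnd_piGen_of_ne A d q j hk]
    abel
  · rw [TInv_piGen_of_ne A d q i h, TEnd_piGen_of_ne A d q i h]

end

theorem TEnd_bijective_general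
    {I : Type*} [Fintype I] [DecidableEq I]
    (q : ℂˣ)
    (A : I → I → ℤ) (d : I → ℕ)
    (hAdiag : ∀ i, A i i = 2)
    (i : I) :
    Function.Bijective (TEnd A d q i) :=
  Function.bijective_iff_has_inverse.mpr ⟨TInv A d q i,
    LWeightLattice.leftInverse_of_piGen (TInv_TEnd_piGen A d q i (hAdiag i)),
    LWeightLattice.leftInverse_of_piGen (TEnd_TInv_piGen A d q i (hAdiag i))⟩

/-- each `T_i` is an automorphism of 𝒫. -/
theorem TEnd_bijective
    {I : Type*} [Fintype I] [DecidableEq I]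
    (q : ℂˣ) (hq : ∀ n : ℕ, 1 ≤ n → q ^ n ≠ 1)
    (A : I → I → ℤ) (d : I → ℕ)
    (hAdiag : ∀ i, A i i = 2)
    (hAoff : ∀ i j, i ≠ j → A i j ∈ ({0, -1, -2, -3} : Set ℤ))
    (hAzero : ∀ i j, A i j = 0 ↔ A j i = 0)
    (hAprod : ∀ i j, i ≠ j → A i j * A j i ≤ 3)
    (hd : ∀ i, 0 < d i)
    (hsym : ∀ i j, (d i : ℤ) * A i j = (d j : ℤ) * A j i)
    (i : I) :
    Function.Bijective (TEnd A d q i) :=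
  TEnd_bijective_general q A d hAdiag i
end

section
/- (Existence of the q-factorization.) For every polynomial π ∈ ℂ[u] with constant coefficient 1 there exists a finite multiset S of pairs (m,a) with m a positive integer and a ∈ ℂˣ, whose elements are pairwise in general position, such that π = ∏_{(m,a) ∈ S} π_a^m. -/
/-!
Factor `π` into linear factors `1 - a u`, i.e. q-strings of length one. If two strings `(m, a)`
and `(r, c)` are not in general position, `a / c = q ^ s` makes their roots overlapping segments
of one geometric progression with ratio `q²`; replacing the two segments by their union and their
intersection keeps the product and the total length and strictly increases the sum of squared
lengths. That sum is bounded by the square of the total length, so merging terminates. Strings of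
length `0` or with `a = 0` equal `1` and are discarded at the end.
-/

open Polynomial

/-- The q-string polynomial `π_a^m(u) = ∏_{j=1}^m (1 − q^{m−2j+1}·a·u)`. -/
noncomputable def qString (q a : ℂ) (m : ℕ) : Polynomial ℂ :=
  ∏ j ∈ Finset.range m,
    (1 - Polynomial.C (q ^ ((m : ℤ) - 2 * ((j : ℤ) + 1) + 1) * a) * Polynomial.X)

/-- The pairs `(m,a)` and `(r,b)` are in general position: `a/b ≠ q^s` for
every integer `s` with `|m − r| + 2 ≤ |s| ≤ m + r` and `s ≡ m + r (mod 2)`. -/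
def GenPos (q : ℂ) (p₁ p₂ : ℕ × ℂ) : Prop :=
  ∀ s : ℤ, |(p₁.1 : ℤ) - (p₂.1 : ℤ)| + 2 ≤ |s| → |s| ≤ (p₁.1 : ℤ) + (p₂.1 : ℤ) →
    s % 2 = ((p₁.1 : ℤ) + (p₂.1 : ℤ)) % 2 → p₁.2 / p₂.2 ≠ q ^ s

namespace Multiset

variable {α : Type*}

theorem exists_eq_cons_cons_of_not_pairwise {r : α → α → Prop} {s : Multiset α}
    (h : ¬ s.Pairwise r) : ∃ a b t, s = a ::ₘ b ::ₘ t ∧ ¬ r a b := by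
  by_contra! hc
  refine h ⟨s.toList, (coe_toList s).symm,
    List.pairwise_iff_forall_sublist.2 fun {a b} hab => ?_⟩
  obtain ⟨t, ht⟩ := le_iff_exists_add.1 <| (coe_toList s) ▸ coe_le.2 hab.subperm
  exact hc a b t (ht.trans (by simp [← cons_coe]))

theorem Pairwise.filter {r : α → α → Prop} {s : Multiset α} (hs : s.Pairwise r)
    (p : α → Prop) [DecidablePred p] : (s.filter p).Pairwise r := by
  obtain ⟨l, rfl, hl⟩ := hs
  exact ⟨l.filter p, rfl, hl.filter p⟩

theorem sum_map_sq_le_sq_sum {R : Type*} [CommSemiring R] [PartialOrder R] [IsOrderedRing R]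
    (s : Multiset R) (hs : ∀ x ∈ s, 0 ≤ x) : (s.map (· ^ 2)).sum ≤ s.sum ^ 2 := by
  induction s using Multiset.induction with
  | empty => simp
  | cons x s ih =>
    have hx : 0 ≤ x := hs x (mem_cons_self x s)
    have hs' : ∀ y ∈ s, 0 ≤ y := fun y hy => hs y (mem_cons_of_mem hy)
    calc ((x ::ₘ s).map (· ^ 2)).sum = x ^ 2 + (s.map (· ^ 2)).sum := by simp
    _ ≤ x ^ 2 + s.sum ^ 2 + 2 * x * s.sum :=
      le_add_of_le_of_nonneg (add_le_add_right (ih hs') _)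
        (mul_nonneg (mul_nonneg zero_le_two hx) (sum_nonneg hs'))
    _ = (x ::ₘ s).sum ^ 2 := by rw [sum_cons]; ring

end Multiset

theorem Polynomial.exists_eq_prod_one_sub_C_mul_X {K : Type*} [Field K] [IsAlgClosed K]
    (f : K[X]) (hf : f.coeff 0 = 1) : ∃ A : Multiset K, f = (A.map fun a => 1 - C a * X).prod := by
  have hroot : ∀ r ∈ f.roots, r ≠ 0 := by
    rintro r hr rfl
    simp [coeff_zero_eq_eval_zero, (mem_roots'.1 hr).2.eq_zero] at hf
  have hfactor : ∀ r ∈ f.roots, X - C r = C (-r) * (1 - C r⁻¹ * X) := by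
    intro r hr
    rw [mul_sub, mul_one, ← mul_assoc, ← C_mul, neg_mul, mul_inv_cancel₀ (hroot r hr), C_neg,
      C_neg, C_1]
    ring
  set g := (f.roots.map fun r => 1 - C r⁻¹ * X).prod
  have hfg : f = C (f.leadingCoeff * (f.roots.map fun r => -r).prod) * g := by
    conv_lhs => rw [← C_leadingCoeff_mul_prod_multiset_X_sub_C (p := f)
      IsAlgClosed.card_roots_eq_natDegree]
    rw [Multiset.map_congr rfl hfactor, Multiset.prod_map_mul, C_mul, map_multiset_prod,
      Multiset.map_map, mul_assoc]
    rfl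
  have hg : g.coeff 0 = 1 := by
    simp [g, coeff_zero_eq_eval_zero, eval_multiset_prod]
  have hconst : f.leadingCoeff * (f.roots.map fun r => -r).prod = 1 := by
    rwa [hfg, mul_coeff_zero, coeff_C_zero, hg, mul_one] at hf
  refine ⟨f.roots.map (·⁻¹), ?_⟩
  conv_lhs => rw [hfg, hconst, C_1, one_mul]
  rw [Multiset.map_map]
  rfl

section QString

variable {q : ℂ}

noncomputable abbrev qStringOf (q : ℂ) (p : ℕ × ℂ) : ℂ[X] := qString q p.2 p.1

theorem qString_one (q a : ℂ) : qString q a 1 = 1 - C a * X := by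
  simp [qString]

theorem qString_eq_one {a : ℂ} {m : ℕ} (h : m = 0 ∨ a = 0) : qString q a m = 1 := by
  rcases h with rfl | rfl <;> simp [qString]

theorem qString_eq_prod_Ico (hq0 : q ≠ 0) (b : ℂ) (t m : ℕ) {a : ℂ}
    (ha : a = q ^ (2 * (t : ℤ) + m - 1) * b) :
    qString q a m = ∏ x ∈ Finset.Ico t (t + m), (1 - C (q ^ (2 * (x : ℤ)) * b) * X) := by
  rw [qString, Finset.prod_Ico_eq_prod_range, add_tsub_cancel_left, ← Finset.prod_range_reflect]
  refine Finset.prod_congr rfl fun j hj => ?_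
  rw [Finset.mem_range] at hj
  rw [ha, ← mul_assoc, ← zpow_add₀ hq0]
  congr 5
  have hcast : ((m - 1 - j : ℕ) : ℤ) = m - 1 - j := by omega
  push_cast [hcast]
  ring

theorem qString_mul_qString_of_overlap (hq0 : q ≠ 0) (b : ℂ) {u v m : ℕ} (hvm : v ≤ m) :
    qString q (q ^ (2 * (u : ℤ) + m - 1) * b) m * qString q (q ^ ((u : ℤ) + v - 1) * b) (u + v) =
      qString q (q ^ ((u : ℤ) + m - 1) * b) (u + m) *
        qString q (q ^ (2 * (u : ℤ) + v - 1) * b) v := by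
  have hunion : Finset.Ico 0 (u + v) ∪ Finset.Ico u (u + m) = Finset.Ico 0 (u + m) := by
    ext; simp only [Finset.mem_union, Finset.mem_Ico]; omega
  have hinter : Finset.Ico 0 (u + v) ∩ Finset.Ico u (u + m) = Finset.Ico u (u + v) := by
    ext; simp only [Finset.mem_inter, Finset.mem_Ico]; omega
  rw [qString_eq_prod_Ico hq0 b u m rfl, qString_eq_prod_Ico hq0 b u v rfl,
    qString_eq_prod_Ico hq0 b 0 (u + v) (by push_cast; ring_nf),
    qString_eq_prod_Ico hq0 b 0 (u + m) (by push_cast; ring_nf), zero_add, zero_add, mul_comm,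
    ← Finset.prod_union_inter, hunion, hinter]

theorem exists_qString_mul_eq_of_div_eq_zpow (hq0 : q ≠ 0) {m r : ℕ} {a c : ℂ} {s : ℤ}
    (h1 : |(m : ℤ) - r| + 2 ≤ s) (h2 : s ≤ m + r) (hpar : s % 2 = (m + r) % 2)
    (hac : a / c = q ^ s) :
    ∃ p₁ p₂ : ℕ × ℂ, qStringOf q p₁ * qStringOf q p₂ = qString q a m * qString q c r ∧
      p₁.1 + p₂.1 = m + r ∧ m ^ 2 + r ^ 2 < p₁.1 ^ 2 + p₂.1 ^ 2 := by
  have hc : c ≠ 0 := by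
    rintro rfl
    exact zpow_ne_zero s hq0 (by simpa using hac.symm)
  -- In the progression `q ^ (2 * x) * b` below, `(r, c)` occupies the indices `[0, u + v)`
  -- and `(m, a)` the indices `[u, u + m)`.
  obtain ⟨u, v, rfl, hs, hu, hvm⟩ : ∃ u v : ℕ, r = u + v ∧ s = m + u - v ∧ 1 ≤ u ∧ v < m := by
    refine ⟨((s + r - m) / 2).toNat, r - ((s + r - m) / 2).toNat, ?_, ?_, ?_, ?_⟩ <;>
      grind
  set b := q ^ (1 - (u : ℤ) - v) * c
  have ha : a = q ^ (2 * (u : ℤ) + m - 1) * b := by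
    rw [(div_eq_iff hc).1 hac, ← mul_assoc, ← zpow_add₀ hq0, hs]
    ring_nf
  have hcb : c = q ^ ((u : ℤ) + v - 1) * b := by
    rw [← mul_assoc, ← zpow_add₀ hq0]
    ring_nf
    simp
  refine ⟨(u + m, q ^ ((u : ℤ) + m - 1) * b), (v, q ^ (2 * (u : ℤ) + v - 1) * b), ?_, by omega,
    by nlinarith⟩
  rw [ha, hcb, qString_mul_qString_of_overlap hq0 b hvm.le]

theorem exists_qString_mul_eq_of_not_genPos (hq0 : q ≠ 0) {p₁ p₂ : ℕ × ℂ}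
    (h : ¬ GenPos q p₁ p₂) :
    ∃ p₁' p₂' : ℕ × ℂ, qStringOf q p₁' * qStringOf q p₂' = qStringOf q p₁ * qStringOf q p₂ ∧
      p₁'.1 + p₂'.1 = p₁.1 + p₂.1 ∧ p₁.1 ^ 2 + p₂.1 ^ 2 < p₁'.1 ^ 2 + p₂'.1 ^ 2 := by
  simp only [GenPos, not_forall, not_not] at h
  obtain ⟨s, h1, h2, hpar, hac⟩ := h
  rcases le_or_gt 0 s with hs | hs
  · rw [abs_of_nonneg hs] at h1 h2
    exact exists_qString_mul_eq_of_div_eq_zpow hq0 h1 h2 hpar hac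
  · rw [abs_of_neg hs] at h1 h2
    obtain ⟨p₁', p₂', hprod, hsum, hsq⟩ := exists_qString_mul_eq_of_div_eq_zpow hq0
      (m := p₂.1) (r := p₁.1) (s := -s) (by rwa [abs_sub_comm]) (by omega) (by omega)
      (by rw [zpow_neg, ← hac, inv_div])
    exact ⟨p₁', p₂', hprod.trans (mul_comm _ _), by omega, by omega⟩

theorem exists_pairwise_genPos_prod_qStringOf_eq (hq0 : q ≠ 0) (S : Multiset (ℕ × ℂ)) :
    ∃ S' : Multiset (ℕ × ℂ), S'.Pairwise (GenPos q) ∧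
      (S'.map (qStringOf q)).prod = (S.map (qStringOf q)).prod := by
  induction hn : (S.map Prod.fst).sum ^ 2 - (S.map fun p => p.1 ^ 2).sum
    using Nat.strong_induction_on generalizing S with
  | _ n ih =>
  by_cases hS : S.Pairwise (GenPos q)
  · exact ⟨S, hS, rfl⟩
  obtain ⟨p₁, p₂, T, rfl, hp⟩ := Multiset.exists_eq_cons_cons_of_not_pairwise hS
  obtain ⟨p₁', p₂', hprod, hsum, hsq⟩ := exists_qString_mul_eq_of_not_genPos hq0 hp
  have hbound := Multiset.sum_map_sq_le_sq_sum ((p₁' ::ₘ p₂' ::ₘ T).map Prod.fst) (by simp)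
  have hlt : ((p₁' ::ₘ p₂' ::ₘ T).map Prod.fst).sum ^ 2 -
      ((p₁' ::ₘ p₂' ::ₘ T).map fun p => p.1 ^ 2).sum < n := by
    simp only [Multiset.map_cons, Multiset.map_map, Multiset.sum_cons, Function.comp_def]
      at hbound hn ⊢
    have hd : p₁'.1 + (p₂'.1 + (T.map Prod.fst).sum) = p₁.1 + (p₂.1 + (T.map Prod.fst).sum) := by
      omega
    rw [hd] at hbound ⊢
    omega
  obtain ⟨S', hS', hprod'⟩ := ih _ hlt (p₁' ::ₘ p₂' ::ₘ T) rfl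
  refine ⟨S', hS', ?_⟩
  simp [hprod', ← mul_assoc, hprod]

theorem prod_qStringOf_filter (S : Multiset (ℕ × ℂ)) :
    ((S.filter fun p => 1 ≤ p.1 ∧ p.2 ≠ 0).map (qStringOf q)).prod =
      (S.map (qStringOf q)).prod := by
  conv_rhs => rw [← Multiset.filter_add_not (fun p => 1 ≤ p.1 ∧ p.2 ≠ 0) S]
  have hdeg : ((S.filter fun p => ¬(1 ≤ p.1 ∧ p.2 ≠ 0)).map (qStringOf q)).prod = 1 := by
    refine Multiset.prod_eq_one ?_
    simp only [Multiset.mem_map, Multiset.mem_filter]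
    rintro _ ⟨p, ⟨-, hp⟩, rfl⟩
    exact qString_eq_one (by by_contra! h; exact hp ⟨by omega, h.2⟩)
  rw [Multiset.map_add, Multiset.prod_add, hdeg, mul_one]

end QString

theorem qFactorization_exists_general
    (q : ℂ) (hq0 : q ≠ 0)
    (π : Polynomial ℂ) (hπ : π.coeff 0 = 1) :
    ∃ S : Multiset (ℕ × ℂ),
      (∀ p ∈ S, 1 ≤ p.1 ∧ p.2 ≠ 0) ∧
      Multiset.Pairwise (GenPos q) S ∧
      π = (S.map fun p => qString q p.2 p.1).prod := by
  obtain ⟨A, hA⟩ := π.exists_eq_prod_one_sub_C_mul_X hπ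
  obtain ⟨S, hS, hprod⟩ := exists_pairwise_genPos_prod_qStringOf_eq hq0 (A.map fun a => (1, a))
  refine ⟨S.filter fun p => 1 ≤ p.1 ∧ p.2 ≠ 0, fun p hp => (Multiset.mem_filter.1 hp).2,
    hS.filter _, ?_⟩
  rw [prod_qStringOf_filter, hprod, Multiset.map_map, hA]
  exact congrArg _ (Multiset.map_congr rfl fun a _ => (qString_one q a).symm)

/-- existence of the q-factorization: every polynomial
`π ∈ ℂ[u]` with constant coefficient `1` is a product `∏_{(m,a)∈S} π_a^m` over
a finite multiset `S` of pairs `(m,a)` (`m ≥ 1`, `a ≠ 0`) which are pairwise in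
general position. -/
theorem qFactorization_exists
    (q : ℂ) (hq0 : q ≠ 0) (hq : ∀ n : ℕ, 1 ≤ n → q ^ n ≠ 1)
    (π : Polynomial ℂ) (hπ : π.coeff 0 = 1) :
    ∃ S : Multiset (ℕ × ℂ),
      (∀ p ∈ S, 1 ≤ p.1 ∧ p.2 ≠ 0) ∧
      Multiset.Pairwise (GenPos q) S ∧
      π = (S.map fun p => qString q p.2 p.1).prod :=
  qFactorization_exists_general q hq0 π hπ
end

section
/- (Uniqueness of the q-factorization.) If S and S′ are finite multisets of pairs (m,a) (m a positive integer, a ∈ ℂˣ), each pairwise in general position, and ∏_{(m,a) ∈ S} π_a^m = ∏_{(m,a) ∈ S′} π_a^m in ℂ[u], then S = S′ as multisets. -/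
/-!
Both products split into factors `1 - x u`, so they agree exactly when the unions of the
q-segments `{a q^{m-1}, a q^{m-3}, …, a q^{1-m}}` agree as multisets. The strings are read off
from that union: since `q` is not a root of unity, some `c` in it has no `c q^{2t}`, `t > 0`,
above it. Every segment through such a `c` starts at `c`, and if the longest of them has length
`m`, general position keeps `c q^{-2m}` out of the union. Hence both sides contain the string of
length `m` starting at `c` (a shorter one would leave `c q^{-2m}` in the union); remove it and
induct.
-/

open Polynomial

lemma zpow_injective_of_not_isOfFinOrder {G₀ : Type*} [GroupWithZero G₀] {q : G₀}
    (hq0 : q ≠ 0) (hq : ¬IsOfFinOrder q) : Function.Injective fun n : ℤ => q ^ n := by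
  intro m n h
  rw [← Units.val_mk0 hq0, Units.isOfFinOrder_val] at hq
  refine injective_zpow_iff_not_isOfFinOrder.mpr hq (Units.ext ?_)
  simpa only [Units.val_zpow_eq_zpow_val, Units.val_mk0] using h

section OneSubCMulX

variable {K : Type*} [Field K]

lemma roots_one_sub_C_mul_X {x : K} (hx : x ≠ 0) : (1 - C x * X).roots = {x⁻¹} := by
  rw [← roots_neg, neg_sub, ← C_1, roots_C_mul_X_sub_C _ hx, mul_one]

lemma roots_prod_one_sub_C_mul_X {s : Multiset K} (hs : ∀ x ∈ s, x ≠ 0) :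
    (s.map fun x => 1 - C x * X).prod.roots = s.map (·⁻¹) := by
  have hne : (0 : K[X]) ∉ s.map fun x => 1 - C x * X := by
    simp only [Multiset.mem_map, not_exists, not_and]
    intro x _ h
    simpa using congrArg (eval 0) h
  rw [roots_multiset_prod _ hne, Multiset.bind_map,
    Multiset.bind_congr fun x hx => roots_one_sub_C_mul_X (hs x hx), Multiset.bind_singleton]

lemma eq_of_prod_one_sub_C_mul_X_eq {s t : Multiset K} (hs : ∀ x ∈ s, x ≠ 0)
    (ht : ∀ x ∈ t, x ≠ 0)
    (h : (s.map fun x => 1 - C x * X).prod = (t.map fun x => 1 - C x * X).prod) : s = t :=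
  Multiset.map_injective inv_injective <| by
    rw [← roots_prod_one_sub_C_mul_X hs, h, roots_prod_one_sub_C_mul_X ht]

end OneSubCMulX

section GenPos

variable {q : ℂ}

lemma GenPos.symm {x y : ℕ × ℂ} (h : GenPos q x y) : GenPos q y x := by
  intro s hlow hhigh hpar heq
  refine h (-s) ?_ ?_ ?_ ?_
  · rwa [abs_neg, abs_sub_comm]
  · rwa [abs_neg, add_comm]
  · rw [Int.neg_emod_two, hpar, add_comm]
  · rw [zpow_neg, ← heq, inv_div]

instance : Std.Symm (GenPos q) := ⟨fun _ _ => GenPos.symm⟩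

lemma genPos_self (hq0 : q ≠ 0) (hq : ¬IsOfFinOrder q) (p : ℕ × ℂ) : GenPos q p p := by
  intro s hlow _ _ heq
  have hs : s ≠ 0 := by rintro rfl; simp at hlow
  rcases eq_or_ne p.2 0 with h0 | h0
  · rw [h0, div_zero] at heq
    exact zpow_ne_zero s hq0 heq.symm
  · rw [div_self h0, ← zpow_zero q] at heq
    exact hs (zpow_injective_of_not_isOfFinOrder hq0 hq heq).symm

lemma forall_genPos_of_pairwise (hq0 : q ≠ 0) (hq : ¬IsOfFinOrder q)
    {S : Multiset (ℕ × ℂ)} (h : S.Pairwise (GenPos q)) : ∀ x ∈ S, ∀ y ∈ S, GenPos q x y := by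
  intro x hx y hy
  rcases eq_or_ne x y with rfl | hne
  · exact genPos_self hq0 hq x
  · exact h.forall hx hy hne

end GenPos

section QSegment

variable {q : ℂ}

noncomputable def qSegment (q : ℂ) (p : ℕ × ℂ) : Multiset ℂ :=
  (Multiset.range p.1).map fun k : ℕ => q ^ ((p.1 : ℤ) - 1 - 2 * k) * p.2

lemma mem_qSegment {p : ℕ × ℂ} {x : ℂ} :
    x ∈ qSegment q p ↔ ∃ k < p.1, q ^ ((p.1 : ℤ) - 1 - 2 * k) * p.2 = x := by
  simp [qSegment]

lemma top_mem_qSegment {p : ℕ × ℂ} (hp : 1 ≤ p.1) : q ^ ((p.1 : ℤ) - 1) * p.2 ∈ qSegment q p :=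
  mem_qSegment.mpr ⟨0, hp, by simp⟩

lemma ne_zero_of_mem_bind_qSegment (hq0 : q ≠ 0) {S : Multiset (ℕ × ℂ)}
    (hS : ∀ p ∈ S, p.2 ≠ 0) {x : ℂ} (hx : x ∈ S.bind (qSegment q)) : x ≠ 0 := by
  obtain ⟨p, hp, hx⟩ := Multiset.mem_bind.mp hx
  obtain ⟨k, -, rfl⟩ := mem_qSegment.mp hx
  exact mul_ne_zero (zpow_ne_zero _ hq0) (hS p hp)

lemma qString_eq_prod_qSegment (q a : ℂ) (m : ℕ) :
    qString q a m = ((qSegment q (m, a)).map fun x => 1 - C x * X).prod := by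
  rw [qString, Finset.prod_eq_multiset_prod, qSegment, Multiset.map_map, Finset.range_val]
  refine congrArg _ (Multiset.map_congr rfl fun j _ => ?_)
  simp only [Function.comp_apply]
  ring_nf

lemma prod_qString_eq_prod_bind_qSegment (q : ℂ) (S : Multiset (ℕ × ℂ)) :
    (S.map fun p => qString q p.2 p.1).prod
      = ((S.bind (qSegment q)).map fun x => 1 - C x * X).prod := by
  rw [Multiset.map_bind, Multiset.prod_bind]
  exact congrArg _ (Multiset.map_congr rfl fun p _ => qString_eq_prod_qSegment q p.2 p.1)

lemma mul_zpow_mem_qSegment_of_lt (hq0 : q ≠ 0) (c : ℂ) {k m : ℕ} (hk : k < m) :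
    c * q ^ (-2 * (k : ℤ)) ∈ qSegment q (m, c * q ^ (1 - (m : ℤ))) := by
  refine mem_qSegment.mpr ⟨k, hk, ?_⟩
  rw [mul_left_comm, ← zpow_add₀ hq0]
  ring_nf

lemma eq_mul_zpow_of_top_eq (hq0 : q ≠ 0) {p : ℕ × ℂ} {c : ℂ}
    (h : q ^ ((p.1 : ℤ) - 1) * p.2 = c) : p = (p.1, c * q ^ (1 - (p.1 : ℤ))) := by
  refine Prod.ext rfl ?_
  rw [← h, mul_comm, ← mul_assoc, ← zpow_add₀ hq0]
  simp

lemma top_eq_of_mem_qSegment (hq0 : q ≠ 0) {p : ℕ × ℂ} {c : ℂ} (hc : c ∈ qSegment q p)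
    (habove : c * q ^ (2 : ℤ) ∉ qSegment q p) : q ^ ((p.1 : ℤ) - 1) * p.2 = c := by
  obtain ⟨k, hk, rfl⟩ := mem_qSegment.mp hc
  rcases k with _ | k
  · simp
  · refine absurd (mem_qSegment.mpr ⟨k, by omega, ?_⟩) habove
    rw [mul_right_comm, ← zpow_add₀ hq0]
    push_cast
    ring_nf

end QSegment

section Uniqueness

variable {q : ℂ}

lemma exists_mem_forall_mul_zpow_notMem (hq0 : q ≠ 0) (hq : ¬IsOfFinOrder q)
    {U : Multiset ℂ} (hU : ∀ x ∈ U, x ≠ 0) {c₀ : ℂ} (hc₀ : c₀ ∈ U) :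
    ∃ c ∈ U, ∀ t : ℤ, 0 < t → c * q ^ (2 * t) ∉ U := by
  have hfin : {z : ℤ | c₀ * q ^ (2 * z) ∈ U}.Finite := by
    refine U.finite_toSet.preimage fun z _ w _ h => ?_
    have := zpow_injective_of_not_isOfFinOrder hq0 hq (mul_left_cancel₀ (hU c₀ hc₀) h)
    omega
  obtain ⟨z, hz, hmax⟩ := Set.exists_max_image _ id hfin ⟨0, by simpa using hc₀⟩
  refine ⟨c₀ * q ^ (2 * z), hz, fun t ht hmem => ?_⟩
  have := hmax (z + t) (by rwa [Set.mem_ofPred_eq, mul_add, zpow_add₀ hq0, ← mul_assoc])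
  simp only [id] at this
  omega

lemma mul_zpow_notMem_qSegment (hq0 : q ≠ 0) {c : ℂ} (hc : c ≠ 0) {m : ℕ} {p : ℕ × ℂ}
    (hgp : GenPos q p (m, c * q ^ (1 - (m : ℤ))))
    (habove : ∀ t : ℤ, 0 < t → c * q ^ (2 * t) ∉ qSegment q p)
    (hlong : q ^ ((p.1 : ℤ) - 1) * p.2 = c → p.1 ≤ m) :
    c * q ^ (-2 * (m : ℤ)) ∉ qSegment q p := by
  obtain ⟨r, b⟩ := p
  intro hmem
  obtain ⟨j, hj, hjb⟩ := mem_qSegment.mp hmem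
  dsimp only at hj hjb hgp habove hlong
  have hb : b = c * q ^ (2 * (j : ℤ) + 1 - r - 2 * m) := by
    calc b = q ^ (-((r : ℤ) - 1 - 2 * j)) * (q ^ ((r : ℤ) - 1 - 2 * j) * b) := by
          rw [← mul_assoc, ← zpow_add₀ hq0]; simp
      _ = c * q ^ (2 * (j : ℤ) + 1 - r - 2 * m) := by
          rw [hjb, mul_left_comm, ← zpow_add₀ hq0]; ring_nf
  have htop : q ^ ((r : ℤ) - 1) * b = c * q ^ (2 * ((j : ℤ) - m)) := by
    rw [hb, mul_left_comm, ← zpow_add₀ hq0]; ring_nf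
  rcases lt_trichotomy j m with hjm | rfl | hmj
  · -- the segments overlap with neither containing the other
    have hs : (2 * j - m - r : ℤ) < 0 := by omega
    refine hgp (2 * j - m - r) ?_ ?_ (by omega) ?_ <;> dsimp only
    · rw [abs_of_neg hs]
      rcases abs_cases ((r : ℤ) - m) with ⟨h, -⟩ | ⟨h, -⟩ <;> omega
    · rw [abs_of_neg hs]; omega
    · rw [hb, mul_div_mul_left _ _ hc, ← zpow_sub₀ hq0]
      ring_nf
  · exact absurd (hlong (by simpa using htop)) (by omega)
  · refine habove (j - m) (by omega) ?_
    rw [← htop]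
    exact top_mem_qSegment (by omega)

lemma exists_mem_mul_zpow_notMem_bind_qSegment (hq0 : q ≠ 0) {X : Multiset (ℕ × ℂ)}
    (hgp : ∀ x ∈ X, ∀ y ∈ X, GenPos q x y) {c : ℂ} (hc0 : c ≠ 0)
    (hc : c ∈ X.bind (qSegment q))
    (habove : ∀ t : ℤ, 0 < t → c * q ^ (2 * t) ∉ X.bind (qSegment q)) :
    ∃ m : ℕ, (m, c * q ^ (1 - (m : ℤ))) ∈ X ∧ c * q ^ (-2 * (m : ℤ)) ∉ X.bind (qSegment q) := by
  have habove' : ∀ p ∈ X, ∀ t : ℤ, 0 < t → c * q ^ (2 * t) ∉ qSegment q p :=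
    fun p hp t ht h => habove t ht (Multiset.mem_bind.mpr ⟨p, hp, h⟩)
  set T := X.toFinset.filter fun p => q ^ ((p.1 : ℤ) - 1) * p.2 = c
  have hT : T.Nonempty := by
    obtain ⟨p, hp, hcp⟩ := Multiset.mem_bind.mp hc
    exact ⟨p, Finset.mem_filter.mpr ⟨Multiset.mem_toFinset.mpr hp,
      top_eq_of_mem_qSegment hq0 hcp (by simpa using habove' p hp 1 one_pos)⟩⟩
  obtain ⟨p, hpT, hlongest⟩ := T.exists_max_image Prod.fst hT
  obtain ⟨hpX, hpc⟩ := Finset.mem_filter.mp hpT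
  rw [Multiset.mem_toFinset, eq_mul_zpow_of_top_eq hq0 hpc] at hpX
  refine ⟨p.1, hpX, fun hmem => ?_⟩
  obtain ⟨p', hp', hmem'⟩ := Multiset.mem_bind.mp hmem
  refine mul_zpow_notMem_qSegment hq0 hc0 (hgp p' hp' _ hpX) (habove' p' hp') (fun htop => ?_)
    hmem'
  exact hlongest p' (Finset.mem_filter.mpr ⟨Multiset.mem_toFinset.mpr hp', htop⟩)

lemma eq_of_bind_qSegment_eq (hq0 : q ≠ 0) (hq : ¬IsOfFinOrder q) {S S' : Multiset (ℕ × ℂ)}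
    (hS : ∀ p ∈ S, 1 ≤ p.1 ∧ p.2 ≠ 0) (hS' : ∀ p ∈ S', 1 ≤ p.1 ∧ p.2 ≠ 0)
    (hgp : ∀ x ∈ S, ∀ y ∈ S, GenPos q x y) (hgp' : ∀ x ∈ S', ∀ y ∈ S', GenPos q x y)
    (h : S.bind (qSegment q) = S'.bind (qSegment q)) : S = S' := by
  induction S using Multiset.strongInductionOn generalizing S' with
  | ih S ih =>
  rcases Multiset.empty_or_exists_mem S with rfl | ⟨p₀, hp₀⟩
  · refine (Multiset.eq_zero_of_forall_notMem fun p hp => ?_).symm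
    have := Multiset.mem_bind.mpr ⟨p, hp, top_mem_qSegment (q := q) (hS' p hp).1⟩
    simp [← h] at this
  have hU0 : ∀ x ∈ S.bind (qSegment q), x ≠ 0 :=
    fun x => ne_zero_of_mem_bind_qSegment hq0 fun p hp => (hS p hp).2
  obtain ⟨c, hc, habove⟩ := exists_mem_forall_mul_zpow_notMem hq0 hq hU0
    (Multiset.mem_bind.mpr ⟨p₀, hp₀, top_mem_qSegment (hS p₀ hp₀).1⟩)
  obtain ⟨m, hm, hbelow⟩ :=
    exists_mem_mul_zpow_notMem_bind_qSegment hq0 hgp (hU0 c hc) hc habove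
  obtain ⟨m', hm', hbelow'⟩ :=
    exists_mem_mul_zpow_notMem_bind_qSegment hq0 hgp' (hU0 c hc) (h ▸ hc) (h ▸ habove)
  obtain rfl : m = m' := by
    by_contra hne
    rcases Nat.lt_or_gt_of_ne hne with hlt | hlt
    · exact hbelow (h ▸ Multiset.mem_bind.mpr ⟨_, hm', mul_zpow_mem_qSegment_of_lt hq0 c hlt⟩)
    · exact hbelow' (h ▸ Multiset.mem_bind.mpr ⟨_, hm, mul_zpow_mem_qSegment_of_lt hq0 c hlt⟩)
  obtain ⟨T, rfl⟩ := Multiset.exists_cons_of_mem hm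
  obtain ⟨T', rfl⟩ := Multiset.exists_cons_of_mem hm'
  rw [Multiset.cons_bind, Multiset.cons_bind, add_right_inj] at h
  have hsub : ∀ {p} {T : Multiset (ℕ × ℂ)}, p ∈ T → p ∈ (m, c * q ^ (1 - (m : ℤ))) ::ₘ T :=
    Multiset.mem_cons_of_mem
  rw [ih T (Multiset.lt_cons_self _ _) (fun p hp => hS p (hsub hp))
    (fun p hp => hS' p (hsub hp)) (fun x hx y hy => hgp x (hsub hx) y (hsub hy))
    (fun x hx y hy => hgp' x (hsub hx) y (hsub hy)) h]

end Uniqueness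

/-- uniqueness of the q-factorization: two finite multisets of
pairs `(m,a)` (`m ≥ 1`, `a ≠ 0`), each pairwise in general position, having the
same product of q-string polynomials, are equal. -/
theorem qFactorization_unique
    (q : ℂ) (hq0 : q ≠ 0) (hq : ∀ n : ℕ, 1 ≤ n → q ^ n ≠ 1)
    (S S' : Multiset (ℕ × ℂ))
    (hS : ∀ p ∈ S, 1 ≤ p.1 ∧ p.2 ≠ 0)
    (hS' : ∀ p ∈ S', 1 ≤ p.1 ∧ p.2 ≠ 0)
    (hSgp : Multiset.Pairwise (GenPos q) S)
    (hS'gp : Multiset.Pairwise (GenPos q) S')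
    (hprod : (S.map fun p => qString q p.2 p.1).prod
        = (S'.map fun p => qString q p.2 p.1).prod) :
    S = S' := by
  have hq' : ¬IsOfFinOrder q := by
    rw [isOfFinOrder_iff_pow_eq_one]
    rintro ⟨n, hn, h⟩
    exact hq n hn h
  refine eq_of_bind_qSegment_eq hq0 hq' hS hS' (forall_genPos_of_pairwise hq0 hq' hSgp)
    (forall_genPos_of_pairwise hq0 hq' hS'gp) (eq_of_prod_one_sub_C_mul_X_eq ?_ ?_ ?_)
  · exact fun x => ne_zero_of_mem_bind_qSegment hq0 fun p hp => (hS p hp).2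
  · exact fun x => ne_zero_of_mem_bind_qSegment hq0 fun p hp => (hS' p hp).2
  · simpa only [prod_qString_eq_prod_bind_qSegment] using hprod
end

section
/- Let π, η ∈ ℂ[u] be polynomials with constant coefficient 1. If π(u)·π(q²u) = η(u)·η(q²u) as polynomials in ℂ[u] (where π(q²u) denotes the composition of π with the polynomial q²·u), then π = η. -/
/-!
If `p ≠ r` agree in degree `0`, write `p - r = X ^ n * s` with `n ≥ 1` and `s(0) ≠ 0`. Then
`p(u) p(cu) - r(u) r(cu) = uⁿ (cⁿ p(u) s(cu) + s(u) r(cu))`, whose coefficient of `uⁿ` is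
`(1 + cⁿ) p(0) s(0)`. For `c = q²` this is nonzero, since `q²ⁿ = -1` would give `q⁴ⁿ = 1`.
-/

open Polynomial

namespace Polynomial

variable {R : Type*} [CommRing R]

theorem mul_comp_C_mul_X_sub_mul_comp_C_mul_X {p r s : R[X]} {n : ℕ} (c : R)
    (hs : p - r = X ^ n * s) :
    p * p.comp (C c * X) - r * r.comp (C c * X)
      = X ^ n * (C (c ^ n) * p * s.comp (C c * X) + s * r.comp (C c * X)) := by
  have hcomp : p.comp (C c * X) - r.comp (C c * X) = C (c ^ n) * X ^ n * s.comp (C c * X) := by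
    rw [← sub_comp, hs, mul_comp, X_pow_comp, mul_pow, C_pow]
  calc p * p.comp (C c * X) - r * r.comp (C c * X)
      = p * (p.comp (C c * X) - r.comp (C c * X)) + (p - r) * r.comp (C c * X) := by ring
    _ = _ := by rw [hcomp, hs]; ring

theorem eq_of_mul_comp_C_mul_X_eq [NoZeroDivisors R] {c : R} (hc : ∀ n, 0 < n → 1 + c ^ n ≠ 0)
    {p r : R[X]} (h0 : p.coeff 0 = r.coeff 0) (hp0 : p.coeff 0 ≠ 0)
    (h : p * p.comp (C c * X) = r * r.comp (C c * X)) : p = r := by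
  by_contra hpr
  obtain ⟨s, hs, hXs⟩ := exists_eq_pow_rootMultiplicity_mul_and_not_dvd (p - r) (sub_ne_zero.2 hpr) 0
  set n := (p - r).rootMultiplicity 0
  rw [C_0, sub_zero] at hs hXs
  have hs0 : s.coeff 0 ≠ 0 := mt X_dvd_iff.2 hXs
  have hn : 0 < n := by
    refine Nat.pos_of_ne_zero fun hn0 => hs0 ?_
    simpa [hn0, h0] using (congrArg (coeff · 0) hs).symm
  have hcoeff := congrArg (coeff · n) (mul_comp_C_mul_X_sub_mul_comp_C_mul_X c hs)
  simp only [sub_eq_zero.2 h, coeff_zero, coeff_X_pow_mul', le_refl, if_true, Nat.sub_self,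
    coeff_add, mul_coeff_zero, coeff_C_zero, comp_C_mul_X_coeff, pow_zero, mul_one, ← h0] at hcoeff
  have hlead : (1 + c ^ n) * p.coeff 0 * s.coeff 0 = 0 := by linear_combination hcoeff.symm
  exact mul_ne_zero (mul_ne_zero (hc n hn) hp0) hs0 hlead

end Polynomial

theorem eq_of_mul_qsq_scale_eq_general
    (q : ℂ) (hq : ∀ n : ℕ, 1 ≤ n → q ^ n ≠ 1)
    (π η : Polynomial ℂ) (hπ : π.coeff 0 = 1) (hη : η.coeff 0 = 1)
    (h : π * π.comp (Polynomial.C (q ^ 2) * Polynomial.X)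
        = η * η.comp (Polynomial.C (q ^ 2) * Polynomial.X)) :
    π = η := by
  refine eq_of_mul_comp_C_mul_X_eq (fun n hn hneg => hq (4 * n) (by omega) ?_)
    (hπ.trans hη.symm) (by simp [hπ]) h
  rw [show 4 * n = 2 * n * 2 by ring, pow_mul, pow_mul, eq_neg_of_add_eq_zero_right hneg]
  norm_num

/-- if `π, η ∈ ℂ[u]` have constant coefficient `1` and
`π(u)·π(q²u) = η(u)·η(q²u)`, then `π = η`.  Here `π(q²u)` is the composition of
`π` with the polynomial `q²·u`. -/
theorem eq_of_mul_qsq_scale_eq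
    (q : ℂ) (hq0 : q ≠ 0) (hq : ∀ n : ℕ, 1 ≤ n → q ^ n ≠ 1)
    (π η : Polynomial ℂ) (hπ : π.coeff 0 = 1) (hη : η.coeff 0 = 1)
    (h : π * π.comp (Polynomial.C (q ^ 2) * Polynomial.X)
        = η * η.comp (Polynomial.C (q ^ 2) * Polynomial.X)) :
    π = η :=
  eq_of_mul_qsq_scale_eq_general q hq π η hπ hη h
end
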